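/- arXiv:1703.05580 — 6 statements merged into one kernel-verified Lean document; each statement's English description precedes it below -/
import Mathlib

section
/- For all complex numbers Z1, Z2, Z3 with |Zj| < 1 for j = 1,2,3, the polynomial P(Z) = 1 - (2/3)(Z1 + Z2 + Z3) + (1/3)(Z1·Z2 + Z1·Z3 + Z2·Z3) is nonzero. -/
/-!
Writing `wⱼ = 1 - Zⱼ`, the polynomial is `(w₂w₃ + w₁w₃ + w₁w₂) / 3 = w₁w₂w₃ (w₁⁻¹ + w₂⁻¹ + w₃⁻¹) / 3`.
Each `wⱼ` lies in the open right half-plane, which is closed under inversion and addition, so the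
sum of the inverses has positive real part and the product does not vanish.
-/

namespace Complex

lemma re_inv_pos {w : ℂ} (hw : 0 < w.re) : 0 < w⁻¹.re := by
  rw [inv_re]
  exact div_pos hw (normSq_pos.mpr (ne_of_apply_ne re hw.ne'))

lemma mul_add_mul_add_mul_ne_zero_of_re_pos {a b c : ℂ} (ha : 0 < a.re) (hb : 0 < b.re)
    (hc : 0 < c.re) : b * c + a * c + a * b ≠ 0 := by
  have ne_zero {w : ℂ} (hw : 0 < w.re) : w ≠ 0 := ne_of_apply_ne re hw.ne'
  have hsum : a⁻¹ + b⁻¹ + c⁻¹ ≠ 0 := by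
    refine ne_of_apply_ne re (ne_of_gt ?_)
    simpa only [add_re, zero_re] using add_pos (add_pos (re_inv_pos ha) (re_inv_pos hb)) (re_inv_pos hc)
  have hfactor : b * c + a * c + a * b = a * b * c * (a⁻¹ + b⁻¹ + c⁻¹) := by
    field_simp [ne_zero ha, ne_zero hb, ne_zero hc]
  rw [hfactor]
  exact mul_ne_zero (mul_ne_zero (mul_ne_zero (ne_zero ha) (ne_zero hb)) (ne_zero hc)) hsum

lemma re_one_sub_pos {z : ℂ} (hz : ‖z‖ < 1) : 0 < (1 - z).re := by
  rw [sub_re, one_re, sub_pos]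
  exact (re_le_norm z).trans_lt hz

end Complex

theorem stmt_0 (Z1 Z2 Z3 : ℂ) (h1 : ‖Z1‖ < 1) (h2 : ‖Z2‖ < 1)
    (h3 : ‖Z3‖ < 1) :
    1 - (2/3 : ℂ) * (Z1 + Z2 + Z3) + (1/3 : ℂ) * (Z1*Z2 + Z1*Z3 + Z2*Z3) ≠ 0 := by
  intro h
  apply Complex.mul_add_mul_add_mul_ne_zero_of_re_pos (Complex.re_one_sub_pos h1)
    (Complex.re_one_sub_pos h2) (Complex.re_one_sub_pos h3)
  linear_combination 3 * h
end

section
/- If Z1, Z2, Z3, Z4 are complex numbers each with real part strictly less than -1/2, then Z1+Z2+Z3+Z4 + 2(Z1Z2 + Z1Z3 + Z1Z4 + Z2Z3 + Z2Z4 + Z3Z4) ≠ 0. -/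
set_option maxHeartbeats 1000000

theorem stmt_4 (Z1 Z2 Z3 Z4 : ℂ) (h1 : Z1.re < -1/2) (h2 : Z2.re < -1/2)
    (h3 : Z3.re < -1/2) (h4 : Z4.re < -1/2) :
    Z1 + Z2 + Z3 + Z4 + 2 * (Z1*Z2 + Z1*Z3 + Z1*Z4 + Z2*Z3 + Z2*Z4 + Z3*Z4) ≠ 0 := by
  intro h
  obtain ⟨x1, y1⟩ := Z1
  obtain ⟨x2, y2⟩ := Z2
  obtain ⟨x3, y3⟩ := Z3
  obtain ⟨x4, y4⟩ := Z4
  rw [Complex.ext_iff] at h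
  obtain ⟨hre, him⟩ := h
  simp only [Complex.add_re, Complex.mul_re, Complex.add_im, Complex.mul_im,
    Complex.zero_re, Complex.zero_im] at hre him h1 h2 h3 h4
  norm_num at hre him
  have hCpos : 0 < (x1+x2+x3+x4 + 2*(x1*x2+x1*x3+x1*x4+x2*x3+x2*x4+x3*x4)) := by
    nlinarith [mul_pos (show (0:ℝ) < -1/2 - x1 by linarith) (show (0:ℝ) < -1/2 - x2 by linarith),
      mul_pos (show (0:ℝ) < -1/2 - x1 by linarith) (show (0:ℝ) < -1/2 - x3 by linarith),
      mul_pos (show (0:ℝ) < -1/2 - x1 by linarith) (show (0:ℝ) < -1/2 - x4 by linarith),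
      mul_pos (show (0:ℝ) < -1/2 - x2 by linarith) (show (0:ℝ) < -1/2 - x3 by linarith),
      mul_pos (show (0:ℝ) < -1/2 - x2 by linarith) (show (0:ℝ) < -1/2 - x4 by linarith),
      mul_pos (show (0:ℝ) < -1/2 - x3 by linarith) (show (0:ℝ) < -1/2 - x4 by linarith)]
  have e1 : (y1+y2+y3+y4)^2 = (y1^2+y2^2+y3^2+y4^2) + (x1+x2+x3+x4 + 2*(x1*x2+x1*x3+x1*x4+x2*x3+x2*x4+x3*x4)) := by linear_combination -hre
  have e2 : 2*(x1*y1+x2*y2+x3*y3+x4*y4) = (y1+y2+y3+y4)*(1+2*(x1+x2+x3+x4)) := by linear_combination -him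
  have key : 4*(x1^2+x2^2+x3^2+x4^2)*(y1^2+y2^2+y3^2+y4^2) - 4*(x1*y1+x2*y2+x3*y3+x4*y4)^2 + (x1+x2+x3+x4 + 2*(x1*x2+x1*x3+x1*x4+x2*x3+x2*x4+x3*x4))*(1+2*(x1+x2+x3+x4))^2 + (y1^2+y2^2+y3^2+y4^2)*(1+4*(x1+x2+x3+x4 + 2*(x1*x2+x1*x3+x1*x4+x2*x3+x2*x4+x3*x4))) = 0 := by
    linear_combination (-(1+2*(x1+x2+x3+x4))^2) * e1 - (2*(x1*y1+x2*y2+x3*y3+x4*y4) + (y1+y2+y3+y4)*(1+2*(x1+x2+x3+x4))) * e2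
  have lag : (0:ℝ) ≤ 4*(x1^2+x2^2+x3^2+x4^2)*(y1^2+y2^2+y3^2+y4^2) - 4*(x1*y1+x2*y2+x3*y3+x4*y4)^2 := by
    have lagid : 4*(x1^2+x2^2+x3^2+x4^2)*(y1^2+y2^2+y3^2+y4^2) - 4*(x1*y1+x2*y2+x3*y3+x4*y4)^2
        = 4*((x1*y2-x2*y1)^2 + (x1*y3-x3*y1)^2 + (x1*y4-x4*y1)^2 + (x2*y3-x3*y2)^2
          + (x2*y4-x4*y2)^2 + (x3*y4-x4*y3)^2) := by ring
    rw [lagid]; positivity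
  have hσ : 1 + 2*(x1+x2+x3+x4) < 0 := by linarith
  have hsq : 0 < (1+2*(x1+x2+x3+x4))^2 := by rw [sq]; exact mul_pos_of_neg_of_neg hσ hσ
  linarith [mul_pos hCpos hsq, mul_nonneg (show (0:ℝ) ≤ (y1^2+y2^2+y3^2+y4^2) by positivity)
    (show (0:ℝ) ≤ 1+4*(x1+x2+x3+x4 + 2*(x1*x2+x1*x3+x1*x4+x2*x3+x2*x4+x3*x4)) by linarith), key, lag]
end

section
/- For all complex Z1, Z2, Z3, Z4 with |Zj| < 1 for each j, the polynomial Q(Z) = 1 - (3/8)(Z1+Z2+Z3+Z4) + (1/8)(Z1Z2Z3 + Z1Z2Z4 + Z1Z3Z4 + Z2Z3Z4) is nonzero. -/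
/-!
The Cayley transform `w = (1 + Z) / (1 - Z)` maps the unit disc into the right half-plane, and
`32 Q = ∏ (1 - Z j) * ((2 + ∑ w j) ^ 2 - ∑ w j ^ 2)`. For `u = 2 + ∑ w j` the real part of `u`
is longer than the real vector `(Re w j)`, and comparing real and imaginary parts of
`u ^ 2 = ∑ w j ^ 2`, with Cauchy–Schwarz on the imaginary part, shows this equation is impossible.
-/

open Finset

lemma sq_sub_sq_ne_of_mul_sq_le {α β A B : ℝ} (hA₀ : 0 ≤ A) (hA : A < α ^ 2) (hB : 0 ≤ B)
    (h : (α * β) ^ 2 ≤ A * B) : α ^ 2 - β ^ 2 ≠ A - B := by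
  intro hEq
  have hβ : β ^ 2 = α ^ 2 - A + B := by linarith
  have hle : (α ^ 2 - A) * (α ^ 2 + B) ≤ 0 := by nlinarith
  have hpos : 0 < (α ^ 2 - A) * (α ^ 2 + B) := mul_pos (by linarith) (by linarith)
  linarith

lemma sq_ne_sum_sq_of_sum_re_sq_lt {ι : Type*} (s : Finset ι) (u : ℂ) (w : ι → ℂ)
    (h : ∑ i ∈ s, (w i).re ^ 2 < u.re ^ 2) : u ^ 2 ≠ ∑ i ∈ s, w i ^ 2 := by
  intro hEq
  have hre : u.re ^ 2 - u.im ^ 2 = ∑ i ∈ s, (w i).re ^ 2 - ∑ i ∈ s, (w i).im ^ 2 := by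
    simpa [sq, Complex.re_sum, sum_sub_distrib] using congrArg Complex.re hEq
  have him : u.re * u.im = ∑ i ∈ s, (w i).re * (w i).im := by
    have him2 := congrArg Complex.im hEq
    simp only [sq, Complex.mul_im, Complex.im_sum] at him2
    have hsum : ∑ i ∈ s, ((w i).re * (w i).im + (w i).im * (w i).re)
        = 2 * ∑ i ∈ s, (w i).re * (w i).im := by
      rw [mul_sum]; exact sum_congr rfl fun _ _ => by ring
    linarith
  have hnonneg {f : ι → ℝ} : 0 ≤ ∑ i ∈ s, f i ^ 2 := sum_nonneg fun i _ => sq_nonneg _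
  refine sq_sub_sq_ne_of_mul_sq_le hnonneg h hnonneg ?_ hre
  rw [him]
  exact sum_mul_sq_le_sq_mul_sq s _ _

lemma sum_re_sq_lt_re_add_sum_sq {ι : Type*} (s : Finset ι) (c : ℂ) (w : ι → ℂ)
    (hc : 0 < c.re) (hw : ∀ i ∈ s, 0 ≤ (w i).re) :
    ∑ i ∈ s, (w i).re ^ 2 < (c + ∑ i ∈ s, w i).re ^ 2 := by
  have hS : 0 ≤ ∑ i ∈ s, (w i).re := sum_nonneg hw
  calc ∑ i ∈ s, (w i).re ^ 2 ≤ (∑ i ∈ s, (w i).re) ^ 2 := sum_sq_le_sq_sum_of_nonneg hw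
    _ < (c.re + ∑ i ∈ s, (w i).re) ^ 2 := by gcongr; linarith
    _ = (c + ∑ i ∈ s, w i).re ^ 2 := by rw [Complex.add_re, Complex.re_sum]

lemma re_one_add_div_one_sub_pos {z : ℂ} (hz : ‖z‖ < 1) : 0 < ((1 + z) / (1 - z)).re := by
  have hz1 : 1 - z ≠ 0 := sub_ne_zero.2 fun h => by simp [← h] at hz
  have hsq : z.re ^ 2 + z.im ^ 2 < 1 := by
    rw [← sq_lt_one_iff₀ (norm_nonneg z), Complex.sq_norm, Complex.normSq_apply] at hz
    linarith [sq z.re, sq z.im]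
  rw [Complex.div_re, ← add_div]
  refine div_pos ?_ (Complex.normSq_pos.2 hz1)
  simp only [Complex.add_re, Complex.sub_re, Complex.add_im, Complex.sub_im, Complex.one_re,
    Complex.one_im]
  nlinarith

theorem stmt_5 (Z1 Z2 Z3 Z4 : ℂ) (h1 : ‖Z1‖ < 1) (h2 : ‖Z2‖ < 1)
    (h3 : ‖Z3‖ < 1) (h4 : ‖Z4‖ < 1) :
    1 - (3/8 : ℂ) * (Z1 + Z2 + Z3 + Z4)
      + (1/8 : ℂ) * (Z1*Z2*Z3 + Z1*Z2*Z4 + Z1*Z3*Z4 + Z2*Z3*Z4) ≠ 0 := by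
  set Z : Fin 4 → ℂ := ![Z1, Z2, Z3, Z4]
  have hZ : ∀ j, ‖Z j‖ < 1 := by intro j; fin_cases j <;> assumption
  have hne : ∀ j, 1 - Z j ≠ 0 := fun j => sub_ne_zero.2 fun h => by simpa [← h] using hZ j
  set w : Fin 4 → ℂ := fun j => (1 + Z j) / (1 - Z j)
  have hw : (2 + ∑ j, w j) ^ 2 ≠ ∑ j, w j ^ 2 :=
    sq_ne_sum_sq_of_sum_re_sq_lt _ _ _ <| sum_re_sq_lt_re_add_sum_sq _ _ _ (by norm_num)
      fun j _ => (re_one_add_div_one_sub_pos (hZ j)).le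
  have hprod : ∏ j, (1 - Z j) ≠ 0 := prod_ne_zero_iff.2 fun j _ => hne j
  have hidentity : 32 * (1 - (3/8 : ℂ) * (Z1 + Z2 + Z3 + Z4)
      + (1/8 : ℂ) * (Z1*Z2*Z3 + Z1*Z2*Z4 + Z1*Z3*Z4 + Z2*Z3*Z4))
      = (∏ j, (1 - Z j)) * ((2 + ∑ j, w j) ^ 2 - ∑ j, w j ^ 2) := by
    have := hne 0; have := hne 1; have := hne 2; have := hne 3
    simp only [w, Z, Fin.sum_univ_four, Fin.prod_univ_four, Matrix.cons_val] at *
    field_simp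
    ring
  intro hQ
  rw [hQ, mul_zero, eq_comm, mul_eq_zero, sub_eq_zero] at hidentity
  exact hidentity.elim hprod hw
end

section
/- The only solution (Z1,Z2,Z3) ∈ ℂ³ of the system P(Z) = 0 and Z1·∂P/∂Z1 = Z2·∂P/∂Z2 = Z3·∂P/∂Z3, subject additionally to |Z1| = |Z2| = |Z3| = 1, is (1,1,1), where P(Z) = 1 - (2/3)(Z1+Z2+Z3) + (1/3)(Z1Z2+Z1Z3+Z2Z3). -/
/-! Each critical equation factors: `Zj ∂P/∂Zj - Zk ∂P/∂Zk = (Zj - Zk)(Zl - 2) / 3`, where `l` is the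
third index. On the unit circle `Zl ≠ 2`, so all coordinates coincide, and on the diagonal
`P(z, z, z) = (z - 1)²`. -/

section CriticalPoint

variable {K : Type*} [Field K] [CharZero K]

theorem eq_of_critical_eq {a b c : K} (hc : c ≠ 2)
    (h : a * (-(2/3 : K) + (1/3 : K) * (b + c)) = b * (-(2/3 : K) + (1/3 : K) * (a + c))) :
    a = b := by
  have hfactor : (a - b) * (c - 2) = 0 := by linear_combination 3 * h
  exact sub_eq_zero.1 ((mul_eq_zero.1 hfactor).resolve_right (sub_ne_zero.2 hc))

theorem eq_one_of_diag_eq_zero {z : K}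
    (h : 1 - (2/3 : K) * (z + z + z) + (1/3 : K) * (z*z + z*z + z*z) = 0) : z = 1 := by
  have hsq : (z - 1) ^ 2 = 0 := by linear_combination h
  exact sub_eq_zero.1 (pow_eq_zero_iff two_ne_zero |>.1 hsq)

end CriticalPoint

theorem Complex.ne_two_of_norm_eq_one {z : ℂ} (hz : ‖z‖ = 1) : z ≠ 2 := by
  rintro rfl
  norm_num at hz

theorem stmt_12_general (Z1 Z2 Z3 : ℂ)
    (hP : 1 - (2/3 : ℂ) * (Z1 + Z2 + Z3) + (1/3 : ℂ) * (Z1*Z2 + Z1*Z3 + Z2*Z3) = 0)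
    (h12 : Z1 * (-(2/3 : ℂ) + (1/3 : ℂ) * (Z2 + Z3))
         = Z2 * (-(2/3 : ℂ) + (1/3 : ℂ) * (Z1 + Z3)))
    (h23 : Z2 * (-(2/3 : ℂ) + (1/3 : ℂ) * (Z1 + Z3))
         = Z3 * (-(2/3 : ℂ) + (1/3 : ℂ) * (Z1 + Z2)))
    (m1 : ‖Z1‖ = 1) (m3 : ‖Z3‖ = 1) :
    Z1 = 1 ∧ Z2 = 1 ∧ Z3 = 1 := by
  obtain rfl : Z1 = Z2 := eq_of_critical_eq (Complex.ne_two_of_norm_eq_one m3) h12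
  obtain rfl : Z1 = Z3 :=
    eq_of_critical_eq (c := Z1) (Complex.ne_two_of_norm_eq_one m1) (by linear_combination h23)
  have h1 : Z1 = 1 := eq_one_of_diag_eq_zero hP
  exact ⟨h1, h1, h1⟩

theorem stmt_12 (Z1 Z2 Z3 : ℂ)
    (hP : 1 - (2/3 : ℂ) * (Z1 + Z2 + Z3) + (1/3 : ℂ) * (Z1*Z2 + Z1*Z3 + Z2*Z3) = 0)
    (h12 : Z1 * (-(2/3 : ℂ) + (1/3 : ℂ) * (Z2 + Z3))
         = Z2 * (-(2/3 : ℂ) + (1/3 : ℂ) * (Z1 + Z3)))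
    (h23 : Z2 * (-(2/3 : ℂ) + (1/3 : ℂ) * (Z1 + Z3))
         = Z3 * (-(2/3 : ℂ) + (1/3 : ℂ) * (Z1 + Z2)))
    (m1 : ‖Z1‖ = 1) (m2 : ‖Z2‖ = 1) (m3 : ‖Z3‖ = 1) :
    Z1 = 1 ∧ Z2 = 1 ∧ Z3 = 1 :=
  stmt_12_general Z1 Z2 Z3 hP h12 h23 m1 m3
end

section
/- The gradient of Q(Z) = 1 - (3/8)(Z1+Z2+Z3+Z4) + (1/8)(Z1Z2Z3 + Z1Z2Z4 + Z1Z3Z4 + Z2Z3Z4) vanishes at a point of {Q = 0} ⊂ ℂ⁴ if and only if that point is (1,1,1,1). -/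
theorem stmt_14 (Z1 Z2 Z3 Z4 : ℂ)
    (hQ : 1 - (3/8 : ℂ) * (Z1 + Z2 + Z3 + Z4)
        + (1/8 : ℂ) * (Z1*Z2*Z3 + Z1*Z2*Z4 + Z1*Z3*Z4 + Z2*Z3*Z4) = 0) :
    (-(3/8 : ℂ) + (1/8 : ℂ) * (Z2*Z3 + Z2*Z4 + Z3*Z4) = 0 ∧
     -(3/8 : ℂ) + (1/8 : ℂ) * (Z1*Z3 + Z1*Z4 + Z3*Z4) = 0 ∧
     -(3/8 : ℂ) + (1/8 : ℂ) * (Z1*Z2 + Z1*Z4 + Z2*Z4) = 0 ∧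
     -(3/8 : ℂ) + (1/8 : ℂ) * (Z1*Z2 + Z1*Z3 + Z2*Z3) = 0)
    ↔ (Z1 = 1 ∧ Z2 = 1 ∧ Z3 = 1 ∧ Z4 = 1) := by
  constructor
  · rintro ⟨h1, h2, h3, h4⟩
    have hs : Z1 + Z2 + Z3 + Z4 = 4 := by
      linear_combination (-4 : ℂ) * hQ
        + (4/3 : ℂ) * (Z1 * h1 + Z2 * h2 + Z3 * h3 + Z4 * h4)
    have k1 : (Z1 - 1) * (Z1 - 3) = 0 := by
      linear_combination (8 : ℂ) * h1 - 4 * (h1 + h2 + h3 + h4) - 4 * Z1 * hQ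
        + (4/3 : ℂ) * Z1 * (Z1 * h1 + Z2 * h2 + Z3 * h3 + Z4 * h4)
    have k2 : (Z2 - 1) * (Z2 - 3) = 0 := by
      linear_combination (8 : ℂ) * h2 - 4 * (h1 + h2 + h3 + h4) - 4 * Z2 * hQ
        + (4/3 : ℂ) * Z2 * (Z1 * h1 + Z2 * h2 + Z3 * h3 + Z4 * h4)
    have k3 : (Z3 - 1) * (Z3 - 3) = 0 := by
      linear_combination (8 : ℂ) * h3 - 4 * (h1 + h2 + h3 + h4) - 4 * Z3 * hQ
        + (4/3 : ℂ) * Z3 * (Z1 * h1 + Z2 * h2 + Z3 * h3 + Z4 * h4)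
    have k4 : (Z4 - 1) * (Z4 - 3) = 0 := by
      linear_combination (8 : ℂ) * h4 - 4 * (h1 + h2 + h3 + h4) - 4 * Z4 * hQ
        + (4/3 : ℂ) * Z4 * (Z1 * h1 + Z2 * h2 + Z3 * h3 + Z4 * h4)
    rcases mul_eq_zero.mp k1 with e1 | e1 <;>
      rcases mul_eq_zero.mp k2 with e2 | e2 <;>
      rcases mul_eq_zero.mp k3 with e3 | e3 <;>
      rcases mul_eq_zero.mp k4 with e4 | e4 <;>
      rw [sub_eq_zero] at e1 e2 e3 e4 <;>
      subst e1 <;> subst e2 <;> subst e3 <;> subst e4 <;>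
      first
        | exact ⟨rfl, rfl, rfl, rfl⟩
        | norm_num at hs
  · rintro ⟨rfl, rfl, rfl, rfl⟩
    norm_num
end

section
/- For Z1, Z2, Z3 ∈ ℂ with Re(Zj) < -1/2 for j = 1,2,3, the complex number Z4 := (-Z1 - Z2 - Z3 - 2Z1Z2 - 2Z1Z3 - 2Z2Z3)/(1 + 2Z1 + 2Z2 + 2Z3) is well-defined (the denominator is nonzero) and satisfies Re(Z4) > -1/2. -/
/-!
Put `aⱼ = -(1 + 2 Zⱼ)`, so that `Re aⱼ > 0`. Then `1 + 2 Z₄ = P / Q` with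
`P = a₁a₂ + a₁a₃ + a₂a₃ + 2(a₁ + a₂ + a₃) + 2` and `Q = a₁ + a₂ + a₃ + 2`, and `Re Q > 0`.
Writing `aⱼ = xⱼ + i yⱼ`, `X = Σ xⱼ`, `Y = Σ yⱼ`, one has
`Re (P Q̄) = (X + 2)(Σ_{i<j} xᵢxⱼ + 2X + 2) + Y² + Σ yⱼ² + ½ Σ xⱼ (yⱼ - Y)² + ½ Σ (X - xⱼ) yⱼ² > 0`,
hence `Re (1 + 2 Z₄) > 0`.
-/

open Complex ComplexConjugate

theorem re_div_pos_of_re_mul_conj_pos {p q : ℂ} (h : 0 < (p * conj q).re) : 0 < (p / q).re := by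
  have hq : q ≠ 0 := by rintro rfl; simp at h
  rw [div_re, ← add_div]
  simp only [mul_re, conj_re, conj_im, mul_neg, sub_neg_eq_add] at h
  exact div_pos h (normSq_pos.2 hq)

theorem re_mul_conj_pos_of_re_pos {a₁ a₂ a₃ : ℂ} (h₁ : 0 < a₁.re) (h₂ : 0 < a₂.re)
    (h₃ : 0 < a₃.re) :
    0 < ((a₁ * a₂ + a₁ * a₃ + a₂ * a₃ + 2 * (a₁ + a₂ + a₃) + 2) *
      conj (a₁ + a₂ + a₃ + 2)).re := by
  obtain ⟨x₁, y₁⟩ := a₁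
  obtain ⟨x₂, y₂⟩ := a₂
  obtain ⟨x₃, y₃⟩ := a₃
  simp only at h₁ h₂ h₃
  simp only [mul_re, mul_im, add_re, add_im, conj_re, conj_im, re_ofNat, im_ofNat]
  set X := x₁ + x₂ + x₃
  set Y := y₁ + y₂ + y₃
  have hS : 0 < x₁ * x₂ + x₁ * x₃ + x₂ * x₃ + 2 * X + 2 := by
    have := mul_pos h₁ h₂; have := mul_pos h₁ h₃; have := mul_pos h₂ h₃; linarith
  linarith [mul_pos (show 0 < X + 2 by linarith) hS, sq_nonneg Y, sq_nonneg y₁, sq_nonneg y₂,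
    sq_nonneg y₃, mul_nonneg h₁.le (sq_nonneg (y₁ - Y)), mul_nonneg h₂.le (sq_nonneg (y₂ - Y)),
    mul_nonneg h₃.le (sq_nonneg (y₃ - Y)), mul_nonneg (add_pos h₂ h₃).le (sq_nonneg y₁),
    mul_nonneg (add_pos h₁ h₃).le (sq_nonneg y₂), mul_nonneg (add_pos h₁ h₂).le (sq_nonneg y₃)]

theorem stmt_15 (Z1 Z2 Z3 : ℂ) (h1 : Z1.re < -1/2) (h2 : Z2.re < -1/2) (h3 : Z3.re < -1/2) :
    1 + 2*Z1 + 2*Z2 + 2*Z3 ≠ 0 ∧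
    ((-Z1 - Z2 - Z3 - 2*Z1*Z2 - 2*Z1*Z3 - 2*Z2*Z3) / (1 + 2*Z1 + 2*Z2 + 2*Z3)).re > -1/2 := by
  set a₁ := -(1 + 2 * Z1)
  set a₂ := -(1 + 2 * Z2)
  set a₃ := -(1 + 2 * Z3)
  have ha₁ : 0 < a₁.re := by simp [a₁]; linarith
  have ha₂ : 0 < a₂.re := by simp [a₂]; linarith
  have ha₃ : 0 < a₃.re := by simp [a₃]; linarith
  have hD : 1 + 2*Z1 + 2*Z2 + 2*Z3 = -(a₁ + a₂ + a₃ + 2) := by ring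
  have hQ : a₁ + a₂ + a₃ + 2 ≠ 0 := fun h ↦ by
    have := congrArg re h
    simp only [add_re, re_ofNat, zero_re] at this
    linarith
  refine ⟨hD ▸ neg_ne_zero.2 hQ, ?_⟩
  have hZ₄ : 1 + 2 * ((-Z1 - Z2 - Z3 - 2*Z1*Z2 - 2*Z1*Z3 - 2*Z2*Z3) / (1 + 2*Z1 + 2*Z2 + 2*Z3)) =
      (a₁ * a₂ + a₁ * a₃ + a₂ * a₃ + 2 * (a₁ + a₂ + a₃) + 2) / (a₁ + a₂ + a₃ + 2) := by
    rw [hD]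
    field_simp
    ring
  have hpos := re_div_pos_of_re_mul_conj_pos (re_mul_conj_pos_of_re_pos ha₁ ha₂ ha₃)
  rw [← hZ₄] at hpos
  simp only [add_re, one_re, mul_re, re_ofNat, im_ofNat, zero_mul, sub_zero] at hpos
  linarith
end
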